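/- Let f̄ > 0, k > 0, α > 0, h ∈ ℝ, and set D = α + f̄ h²/2. Consider the planar vector field G(v,w) = (w, (f̄ − k v + k h w) v / (α + (k h²/2) v)). Then G is differentiable at the equilibrium A = (f̄/k, 0), its total derivative at A is the linear map given by the 2×2 matrix J = [[0, 1], [−f̄/D, f̄h/D]], whose determinant f̄/D is strictly positive and whose trace f̄h/D has the same sign as h; and in the case h = 0 the eigenvalues of J are the purely imaginary complex conjugate pair ± i √(f̄/α). -/

import Mathlib

noncomputable section

/-- The planar vector field `G(v,w) = (w, (f̄ − k v + k h w) v / (α + (k h²/2) v))`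
arising from the steady-state equation of the distributed hypercycle model. -/
def G (fbar k α h : ℝ) (p : ℝ × ℝ) : ℝ × ℝ :=
  (p.2, (fbar - k * p.1 + k * h * p.2) * p.1 / (α + (k * h ^ 2 / 2) * p.1))

/-- at the equilibrium `A = (f̄/k, 0)` the vector field `G` is
differentiable with Jacobian matrix `J = [[0, 1], [−f̄/D, f̄h/D]]`, `D = α + f̄h²/2`;
`det J = f̄/D > 0`, `trace J = f̄h/D` has the sign of `h`, and for `h = 0` the
eigenvalues of `J` are `± i √(f̄/α)`. -/
theorem stmt7 (fbar k α h : ℝ) (hf : 0 < fbar) (hk : 0 < k) (hα : 0 < α) :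
    let D : ℝ := α + fbar * h ^ 2 / 2
    let J : Matrix (Fin 2) (Fin 2) ℝ := !![0, 1; -(fbar / D), fbar * h / D]
    (∃ L : ℝ × ℝ →L[ℝ] ℝ × ℝ,
      (∀ p : ℝ × ℝ, L p = (p.2, -(fbar / D) * p.1 + (fbar * h / D) * p.2)) ∧
      HasFDerivAt (G fbar k α h) L ((fbar / k, 0) : ℝ × ℝ)) ∧
    J.det = fbar / D ∧ 0 < J.det ∧
    Matrix.trace J = fbar * h / D ∧
    (0 < h → 0 < Matrix.trace J) ∧ (h < 0 → Matrix.trace J < 0) ∧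
    (h = 0 → Matrix.trace J = 0) ∧
    (h = 0 →
      (∃ v : Fin 2 → ℂ, v ≠ 0 ∧
        (J.map (Complex.ofReal)).mulVec v = (Complex.I * (Real.sqrt (fbar / α) : ℂ)) • v) ∧
      (∃ v : Fin 2 → ℂ, v ≠ 0 ∧
        (J.map (Complex.ofReal)).mulVec v = (-(Complex.I * (Real.sqrt (fbar / α) : ℂ))) • v)) := by
  intro D J
  have hD : 0 < D := by unfold D; positivity
  have hDne : D ≠ 0 := hD.ne'
  have hJ00 : J 0 0 = 0 := by simp [J]
  have hJ01 : J 0 1 = 1 := by simp [J]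
  have hJ10 : J 1 0 = -(fbar / D) := by simp [J]
  have hJ11 : J 1 1 = fbar * h / D := by simp [J]
  refine ⟨?_, ?_, ?_, ?_, ?_, ?_, ?_, ?_⟩
  · -- derivative part
    set A : ℝ × ℝ := (fbar / k, 0) with hA
    set L : ℝ × ℝ →L[ℝ] ℝ × ℝ :=
      (ContinuousLinearMap.snd ℝ ℝ ℝ).prod
        ((-(fbar / D)) • ContinuousLinearMap.fst ℝ ℝ ℝ +
          (fbar * h / D) • ContinuousLinearMap.snd ℝ ℝ ℝ) with hL
    refine ⟨L, fun p => by simp [hL], ?_⟩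
    have ha := ((hasFDerivAt_const fbar A).sub
        ((hasFDerivAt_fst (𝕜 := ℝ) (p := A)).const_mul k)).add
        ((hasFDerivAt_snd (𝕜 := ℝ) (p := A)).const_mul (k * h))
    have hnum := ha.mul (hasFDerivAt_fst (𝕜 := ℝ) (p := A))
    have hden := (hasFDerivAt_const α A).add
        ((hasFDerivAt_fst (𝕜 := ℝ) (p := A)).const_mul (k * h ^ 2 / 2))
    have hdenA : α + k * h ^ 2 / 2 * A.1 = D := by
      unfold D
      field_simp [hA]
      simp [hA]; field_simp
    have h1 : HasFDerivAt (fun x : ℝ => x⁻¹)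
        (ContinuousLinearMap.smulRight (1 : ℝ →L[ℝ] ℝ) (-(D ^ 2)⁻¹))
        (α + k * h ^ 2 / 2 * A.1) := by
      rw [hdenA]; exact hasFDerivAt_inv hDne
    have hinv := h1.comp A hden
    have hmul := hnum.mul hinv
    have hquot : HasFDerivAt
        (fun p : ℝ × ℝ => (fbar - k * p.1 + k * h * p.2) * p.1 / (α + k * h ^ 2 / 2 * p.1))
        _ A :=
      hmul.congr_of_eventuallyEq (Filter.Eventually.of_forall fun p => by
        simp [div_eq_mul_inv, Function.comp])
    refine (HasFDerivAt.prodMk hasFDerivAt_snd hquot).congr_fderiv ?_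
    have hnumA : fbar - k * A.1 + k * h * A.2 = 0 := by
      have : k * (fbar / k) = fbar := by field_simp
      simp [hA, this]
    refine ContinuousLinearMap.ext fun p => Prod.ext ?_ ?_
    · simp [hL]
    · simp only [hL, ContinuousLinearMap.prod_apply, ContinuousLinearMap.add_apply,
        ContinuousLinearMap.smul_apply, ContinuousLinearMap.comp_apply,
        ContinuousLinearMap.coe_fst', ContinuousLinearMap.coe_snd',
        ContinuousLinearMap.smulRight_apply, ContinuousLinearMap.one_apply,
        ContinuousLinearMap.coe_sub', ContinuousLinearMap.zero_apply, Pi.sub_apply,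
        Pi.add_apply, Pi.mul_apply, hnumA, smul_eq_mul, Function.comp]
      have hd2 : α + k * h ^ 2 / 2 * (fbar / k) = D := hdenA
      rw [hd2]
      field_simp
      have hAk : A.1 * k = fbar := (div_mul_cancel₀ fbar hk.ne' : fbar / k * k = fbar)
      linear_combination (h * D * p.2 * 2 - p.1 * D * 2) * hAk
  · rw [Matrix.det_fin_two, hJ00, hJ01, hJ10, hJ11]; ring
  · rw [Matrix.det_fin_two, hJ00, hJ01, hJ10, hJ11]
    have : (0:ℝ) < fbar / D := div_pos hf hD
    nlinarith
  · rw [Matrix.trace_fin_two, hJ00, hJ11]; ring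
  · intro hh
    rw [Matrix.trace_fin_two, hJ00, hJ11]
    have : 0 < fbar * h / D := by positivity
    linarith
  · intro hh
    rw [Matrix.trace_fin_two, hJ00, hJ11]
    have : fbar * h / D < 0 := div_neg_of_neg_of_pos (mul_neg_of_pos_of_neg hf hh) hD
    linarith
  · intro h0
    rw [Matrix.trace_fin_two, hJ00, hJ11, h0]; ring
  · intro h0
    subst h0
    have hDα : D = α := by unfold D; ring
    set s : ℝ := Real.sqrt (fbar / α) with hs
    have hs2 : (s : ℂ) ^ 2 = ((fbar / α : ℝ) : ℂ) := by
      rw [← Complex.ofReal_pow]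
      norm_cast
      exact Real.sq_sqrt (le_of_lt (div_pos hf hα))
    have key : ∀ c : ℂ, c ^ 2 = -((fbar / α : ℝ) : ℂ) →
        ∃ v : Fin 2 → ℂ, v ≠ 0 ∧ (J.map (Complex.ofReal)).mulVec v = c • v := by
      intro c hc
      refine ⟨![1, c], ?_, ?_⟩
      · intro hcon
        have := congrFun hcon 0
        simp at this
      · funext i
        fin_cases i <;>
          simp [Matrix.mulVec, dotProduct, Fin.sum_univ_two, hJ00, hJ01, hJ10, hJ11,
            hDα]
        push_cast at hc ⊢
        linear_combination -hc
    constructor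
    · refine key _ ?_
      rw [mul_pow, Complex.I_sq, hs2]; ring
    · refine key _ ?_
      rw [neg_pow, mul_pow, Complex.I_sq, hs2]; ring
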